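/- arXiv:2205.00455 — 2 statements merged into one kernel-verified Lean document; each statement's English description precedes it below -/
import Mathlib

section
/- For matrices $M, N \in \mathbb{C}^{m \times n}$ and any index $i \le \min(m,n)$, the $i$-th largest singular values satisfy $|\sigma_i(M) - \sigma_i(N)| \le \|M - N\|_2$, where $\|\cdot\|_2$ is the spectral norm. -/
/-!
Courant–Fischer argument. Order the singular values decreasingly, indexing from `0`. The right
singular vectors of `M` belonging to `σ₀(M), …, σᵢ(M)` span an `(i + 1)`-dimensional space on which
`‖M x‖ ≥ σᵢ(M) ‖x‖`, and those of `N` belonging to `σᵢ(N), …, σₙ₋₁(N)` span an `(n - i)`-dimensional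
space on which `‖N x‖ ≤ σᵢ(N) ‖x‖`. The two spaces meet in some `x ≠ 0`, and
`‖M x‖ ≤ ‖N x‖ + ‖M - N‖ ‖x‖` gives `σᵢ(M) - σᵢ(N) ≤ ‖M - N‖`; swapping `M` and `N` gives the rest.
-/

open Matrix

/-- Spectral (l2 operator) norm of a complex matrix. -/
noncomputable def specNorm {m n : ℕ} (A : Matrix (Fin m) (Fin n) ℂ) : ℝ :=
  ‖LinearMap.toContinuousLinearMap (Matrix.toEuclideanLin A)‖

open Finset

open scoped InnerProductSpace

theorem Submodule.exists_mem_inf_ne_zero_of_finrank_lt_add {K : Type*} {V : Type*} [DivisionRing K]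
    [AddCommGroup V] [Module K V] [FiniteDimensional K V] (U W : Submodule K V)
    (h : Module.finrank K V < Module.finrank K U + Module.finrank K W) :
    ∃ x ∈ U ⊓ W, x ≠ 0 := by
  refine Submodule.exists_mem_ne_zero_of_ne_bot fun hbot => ?_
  have := Submodule.finrank_sup_add_finrank_inf_eq U W
  rw [hbot, finrank_bot] at this
  have := Submodule.finrank_le (U ⊔ W)
  omega

section OrthonormalBasis

variable {ι 𝕜 E : Type*} [Fintype ι] [RCLike 𝕜] [NormedAddCommGroup E] [InnerProductSpace 𝕜 E]

theorem OrthonormalBasis.finrank_span_image (b : OrthonormalBasis ι 𝕜 E) (s : Finset ι) :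
    Module.finrank 𝕜 (Submodule.span 𝕜 (b '' s)) = #s := by
  have hli : LinearIndependent 𝕜 fun j : (s : Set ι) => b j :=
    b.orthonormal.linearIndependent.comp _ Subtype.val_injective
  rw [Set.image_eq_range, finrank_span_eq_card hli]
  simp

theorem OrthonormalBasis.repr_apply_eq_zero_of_mem_span_image (b : OrthonormalBasis ι 𝕜 E)
    {s : Set ι} {x : E} (hx : x ∈ Submodule.span 𝕜 (b '' s)) {j : ι} (hj : j ∉ s) :
    b.repr x j = 0 := by
  rw [← b.coe_toBasis_repr_apply, ← Finsupp.notMem_support_iff]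
  exact fun hmem => hj (b.toBasis.mem_span_image.1 (by simpa using hx) hmem)

theorem OrthonormalBasis.sum_mul_norm_repr_sq_le_of_mem_span_image (b : OrthonormalBasis ι 𝕜 E)
    {s : Set ι} {f g : ι → ℝ} (hfg : ∀ j ∈ s, f j ≤ g j) {x : E}
    (hx : x ∈ Submodule.span 𝕜 (b '' s)) :
    ∑ j, f j * ‖b.repr x j‖ ^ 2 ≤ ∑ j, g j * ‖b.repr x j‖ ^ 2 := by
  refine sum_le_sum fun j _ => ?_
  by_cases hj : j ∈ s
  · exact mul_le_mul_of_nonneg_right (hfg j hj) (sq_nonneg _)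
  · simp [b.repr_apply_eq_zero_of_mem_span_image hx hj]

theorem OrthonormalBasis.norm_sq_eq_sum_norm_repr_sq (b : OrthonormalBasis ι 𝕜 E) (x : E) :
    ‖x‖ ^ 2 = ∑ j, ‖b.repr x j‖ ^ 2 := by
  simp_rw [b.repr_apply_apply, b.sum_sq_norm_inner_right]

end OrthonormalBasis

namespace Matrix

variable {𝕜 m n : Type*} [RCLike 𝕜] [Fintype m] [Fintype n] [DecidableEq n]

theorem IsHermitian.repr_toEuclideanLin_eigenvectorBasis {A : Matrix n n 𝕜} (hA : A.IsHermitian)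
    (x : EuclideanSpace 𝕜 n) (j : n) :
    hA.eigenvectorBasis.repr (toEuclideanLin A x) j =
      hA.eigenvalues j * hA.eigenvectorBasis.repr x j := by
  have hAv : toEuclideanLin A (hA.eigenvectorBasis j) =
      (hA.eigenvalues j : 𝕜) • hA.eigenvectorBasis j := by
    ext k
    simpa [toLpLin_apply, RCLike.real_smul_eq_coe_mul] using
      congrFun (hA.mulVec_eigenvectorBasis j) k
  rw [OrthonormalBasis.repr_apply_apply, OrthonormalBasis.repr_apply_apply,
    ← isSymmetric_toEuclideanLin_iff.2 hA, hAv, inner_smul_left, RCLike.conj_ofReal]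

theorem IsHermitian.re_inner_toEuclideanLin_eq_sum {A : Matrix n n 𝕜} (hA : A.IsHermitian)
    (x : EuclideanSpace 𝕜 n) :
    RCLike.re ⟪x, toEuclideanLin A x⟫_𝕜 =
      ∑ j, hA.eigenvalues j * ‖hA.eigenvectorBasis.repr x j‖ ^ 2 := by
  rw [← hA.eigenvectorBasis.repr.inner_map_map, PiLp.inner_apply, map_sum]
  refine sum_congr rfl fun j _ => ?_
  rw [hA.repr_toEuclideanLin_eigenvectorBasis, RCLike.inner_apply, mul_assoc, RCLike.mul_conj,
    ← RCLike.ofReal_pow, ← RCLike.ofReal_mul, RCLike.ofReal_re]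

noncomputable def rightSingularBasis (A : Matrix m n 𝕜) :
    OrthonormalBasis n 𝕜 (EuclideanSpace 𝕜 n) :=
  (isHermitian_conjTranspose_mul_self A).eigenvectorBasis

/-- Unsorted: `A.singularValue j` belongs to the right singular vector `A.rightSingularBasis j`. -/
noncomputable def singularValue (A : Matrix m n 𝕜) (j : n) : ℝ :=
  √((isHermitian_conjTranspose_mul_self A).eigenvalues j)

variable [DecidableEq m]

theorem norm_toEuclideanLin_sq_eq_sum (A : Matrix m n 𝕜) (x : EuclideanSpace 𝕜 n) :
    ‖toEuclideanLin A x‖ ^ 2 =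
      ∑ j, A.singularValue j ^ 2 * ‖A.rightSingularBasis.repr x j‖ ^ 2 := by
  have hgram : toEuclideanLin (Aᴴ * A) x = (toEuclideanLin A).adjoint (toEuclideanLin A x) := by
    rw [← toEuclideanLin_conjTranspose_eq_adjoint, toLpLin_mul_same, LinearMap.comp_apply]
  simp_rw [singularValue, Real.sq_sqrt (eigenvalues_conjTranspose_mul_self_nonneg A _),
    rightSingularBasis, ← (isHermitian_conjTranspose_mul_self A).re_inner_toEuclideanLin_eq_sum,
    hgram, LinearMap.adjoint_inner_right, inner_self_eq_norm_sq]

theorem mul_norm_le_norm_toEuclideanLin_of_mem_span {A : Matrix m n 𝕜} {s : Set n} {c : ℝ}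
    (hc : 0 ≤ c) (hs : ∀ j ∈ s, c ≤ A.singularValue j) {x : EuclideanSpace 𝕜 n}
    (hx : x ∈ Submodule.span 𝕜 (A.rightSingularBasis '' s)) :
    c * ‖x‖ ≤ ‖toEuclideanLin A x‖ := by
  refine (pow_le_pow_iff_left₀ (by positivity) (norm_nonneg _) two_ne_zero).1 ?_
  rw [mul_pow, norm_toEuclideanLin_sq_eq_sum, A.rightSingularBasis.norm_sq_eq_sum_norm_repr_sq,
    mul_sum]
  exact A.rightSingularBasis.sum_mul_norm_repr_sq_le_of_mem_span_image
    (fun j hj => pow_le_pow_left₀ hc (hs j hj) 2) hx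

theorem norm_toEuclideanLin_le_mul_of_mem_span {A : Matrix m n 𝕜} {s : Set n} {c : ℝ}
    (hc : 0 ≤ c) (hs : ∀ j ∈ s, A.singularValue j ≤ c) {x : EuclideanSpace 𝕜 n}
    (hx : x ∈ Submodule.span 𝕜 (A.rightSingularBasis '' s)) :
    ‖toEuclideanLin A x‖ ≤ c * ‖x‖ := by
  refine (pow_le_pow_iff_left₀ (norm_nonneg _) (by positivity) two_ne_zero).1 ?_
  rw [mul_pow, norm_toEuclideanLin_sq_eq_sum, A.rightSingularBasis.norm_sq_eq_sum_norm_repr_sq,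
    mul_sum]
  exact A.rightSingularBasis.sum_mul_norm_repr_sq_le_of_mem_span_image
    (fun j hj => pow_le_pow_left₀ (Real.sqrt_nonneg _) (hs j hj) 2) hx

theorem sub_le_of_card_lt_card_add_card (M N : Matrix m n 𝕜) {sM sN : Finset n}
    (hcard : Fintype.card n < #sM + #sN) {c d C : ℝ} (hc : 0 ≤ c) (hd : 0 ≤ d)
    (hM : ∀ j ∈ sM, c ≤ M.singularValue j) (hN : ∀ j ∈ sN, N.singularValue j ≤ d)
    (hC : ∀ x, ‖toEuclideanLin (M - N) x‖ ≤ C * ‖x‖) :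
    c - d ≤ C := by
  obtain ⟨x, hx, hx0⟩ := Submodule.exists_mem_inf_ne_zero_of_finrank_lt_add
    (Submodule.span 𝕜 (M.rightSingularBasis '' sM)) (Submodule.span 𝕜 (N.rightSingularBasis '' sN))
    (by rwa [finrank_euclideanSpace, OrthonormalBasis.finrank_span_image,
      OrthonormalBasis.finrank_span_image])
  have hMx := mul_norm_le_norm_toEuclideanLin_of_mem_span hc hM (Submodule.mem_inf.1 hx).1
  have hNx := norm_toEuclideanLin_le_mul_of_mem_span hd hN (Submodule.mem_inf.1 hx).2
  have htri : ‖toEuclideanLin M x‖ ≤ ‖toEuclideanLin N x‖ + ‖toEuclideanLin (M - N) x‖ := by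
    simpa using norm_le_insert' (toEuclideanLin M x) (toEuclideanLin N x)
  refine le_of_mul_le_mul_right ?_ (norm_pos_iff.2 hx0)
  linarith [hC x]

end Matrix

theorem norm_toEuclideanLin_le_specNorm_mul {m n : ℕ} (A : Matrix (Fin m) (Fin n) ℂ)
    (x : EuclideanSpace ℂ (Fin n)) : ‖toEuclideanLin A x‖ ≤ specNorm A * ‖x‖ :=
  (LinearMap.toContinuousLinearMap (toEuclideanLin A)).le_opNorm x

theorem specNorm_sub_comm {m n : ℕ} (M N : Matrix (Fin m) (Fin n) ℂ) :
    specNorm (M - N) = specNorm (N - M) := by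
  rw [specNorm, specNorm, ← neg_sub, map_neg, map_neg, norm_neg]

theorem sub_le_specNorm_sub {m n : ℕ} (M N : Matrix (Fin m) (Fin n) ℂ) {σM σN : Fin n → ℝ}
    (hσM : Antitone σM) (heM : ∃ e : Equiv.Perm (Fin n), ∀ j, σM j = M.singularValue (e j))
    (hσN : Antitone σN) (heN : ∃ e : Equiv.Perm (Fin n), ∀ j, σN j = N.singularValue (e j))
    (i : Fin n) :
    σM i - σN i ≤ specNorm (M - N) := by
  obtain ⟨eM, heM⟩ := heM
  obtain ⟨eN, heN⟩ := heN
  refine sub_le_of_card_lt_card_add_card M N (sM := (Iic i).map eM.toEmbedding)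
    (sN := (Ici i).map eN.toEmbedding) ?_ (heM i ▸ Real.sqrt_nonneg _)
    (heN i ▸ Real.sqrt_nonneg _) ?_ ?_ (norm_toEuclideanLin_le_specNorm_mul (M - N))
  · simp only [card_map, Fin.card_Iic, Fin.card_Ici, Fintype.card_fin]
    omega
  · simp only [mem_map_equiv, mem_Iic]
    intro j hj
    simpa [heM] using hσM hj
  · simp only [mem_map_equiv, mem_Ici]
    intro j hj
    simpa [heN] using hσN hj

theorem weyl_singular_values_general {m n : ℕ} (M N : Matrix (Fin m) (Fin n) ℂ)
    (σM σN : Fin n → ℝ)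
    (hM1 : Antitone σM)
    (hM2 : ∃ e : Equiv.Perm (Fin n), ∀ j, σM j =
      Real.sqrt ((Matrix.isHermitian_conjTranspose_mul_self M).eigenvalues (e j)))
    (hN1 : Antitone σN)
    (hN2 : ∃ e : Equiv.Perm (Fin n), ∀ j, σN j =
      Real.sqrt ((Matrix.isHermitian_conjTranspose_mul_self N).eigenvalues (e j)))
    (i : Fin n) :
    |σM i - σN i| ≤ specNorm (M - N) :=
  abs_sub_le_iff.2 ⟨sub_le_specNorm_sub M N hM1 hM2 hN1 hN2 i,
    specNorm_sub_comm M N ▸ sub_le_specNorm_sub N M hN1 hN2 hM1 hM2 i⟩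

/-- Weyl's inequality for singular values. -/
theorem weyl_singular_values {m n : ℕ} (M N : Matrix (Fin m) (Fin n) ℂ)
    (σM σN : Fin n → ℝ)
    (hM1 : Antitone σM)
    (hM2 : ∃ e : Equiv.Perm (Fin n), ∀ j, σM j =
      Real.sqrt ((Matrix.isHermitian_conjTranspose_mul_self M).eigenvalues (e j)))
    (hN1 : Antitone σN)
    (hN2 : ∃ e : Equiv.Perm (Fin n), ∀ j, σN j =
      Real.sqrt ((Matrix.isHermitian_conjTranspose_mul_self N).eigenvalues (e j)))
    (i : Fin n) (hi : (i : ℕ) < min m n) :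
    |σM i - σN i| ≤ specNorm (M - N) :=
  weyl_singular_values_general M N σM σN hM1 hM2 hN1 hN2 i
end

section
/- Let $C \in \mathbb{R}^{m \times (n+1)}$, let $X \in \mathbb{R}^{(n+1)\times l}$ have orthonormal columns, and let $\hat{V} \in \mathbb{R}^{(n+1)\times l}$ satisfy $\|XX^T - \hat{V}\hat{V}^T\|_F \le \xi$ for some $\xi > 0$. Then $\|C - C\hat{V}\hat{V}^T\|_F^2 \le (1+\xi)\|C - CXX^T\|_F^2 + (1 + 1/\xi)\,\xi^2\,\|C\|_F^2$. -/
open Matrix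

/-- Frobenius norm of a real matrix. -/
noncomputable def frob {m n : ℕ} (A : Matrix (Fin m) (Fin n) ℝ) : ℝ :=
  Real.sqrt (∑ i, ∑ j, (A i j) ^ 2)

attribute [local instance] Matrix.frobeniusSeminormedAddCommGroup

lemma frob_eq_norm {m n : ℕ} (A : Matrix (Fin m) (Fin n) ℝ) : frob A = ‖A‖ := by
  simp only [frob, frobenius_norm_def, Real.sqrt_eq_rpow, Real.norm_eq_abs, Real.rpow_two, sq_abs]

lemma add_sq_le_one_add_mul_sq_add {K : Type*} [Field K] [LinearOrder K] [IsStrictOrderedRing K]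
    (a b : K) {ε : K} (hε : 0 < ε) :
    (a + b) ^ 2 ≤ (1 + ε) * a ^ 2 + (1 + 1 / ε) * b ^ 2 := by
  have hcross : 2 * a * b ≤ ε * a ^ 2 + ε⁻¹ * b ^ 2 := two_mul_le_add_mul_sq hε
  calc (a + b) ^ 2 = a ^ 2 + b ^ 2 + 2 * a * b := by ring
    _ ≤ a ^ 2 + b ^ 2 + (ε * a ^ 2 + ε⁻¹ * b ^ 2) := by gcongr
    _ = (1 + ε) * a ^ 2 + (1 + 1 / ε) * b ^ 2 := by ring

lemma frobenius_norm_sub_mul_le {𝕜 m n : Type*} [RCLike 𝕜] [Fintype m] [Fintype n]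
    (C : Matrix m n 𝕜) (P Q : Matrix n n 𝕜) :
    ‖C - C * Q‖ ≤ ‖C - C * P‖ + ‖C‖ * ‖P - Q‖ :=
  calc ‖C - C * Q‖ = ‖(C - C * P) + C * (P - Q)‖ := by rw [Matrix.mul_sub, sub_add_sub_cancel]
    _ ≤ ‖C - C * P‖ + ‖C * (P - Q)‖ := norm_add_le _ _
    _ ≤ ‖C - C * P‖ + ‖C‖ * ‖P - Q‖ := by grw [frobenius_norm_mul]

theorem frob_sq_proj_perturbation_general {m n l : ℕ}
    (C : Matrix (Fin m) (Fin (n + 1)) ℝ)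
    (X V : Matrix (Fin (n + 1)) (Fin l) ℝ)
    (ξ : ℝ) (hξ : 0 < ξ)
    (h : frob (X * Xᵀ - V * Vᵀ) ≤ ξ) :
    frob (C - C * (V * Vᵀ)) ^ 2 ≤
      (1 + ξ) * frob (C - C * (X * Xᵀ)) ^ 2 + (1 + 1 / ξ) * ξ ^ 2 * frob C ^ 2 := by
  simp only [frob_eq_norm] at h ⊢
  have hnorm : ‖C - C * (V * Vᵀ)‖ ≤ ‖C - C * (X * Xᵀ)‖ + ‖C‖ * ξ := by
    grw [frobenius_norm_sub_mul_le C (X * Xᵀ), h]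
  calc ‖C - C * (V * Vᵀ)‖ ^ 2 ≤ (‖C - C * (X * Xᵀ)‖ + ‖C‖ * ξ) ^ 2 := by gcongr
    _ ≤ (1 + ξ) * ‖C - C * (X * Xᵀ)‖ ^ 2 + (1 + 1 / ξ) * (‖C‖ * ξ) ^ 2 :=
      add_sq_le_one_add_mul_sq_add _ _ hξ
    _ = (1 + ξ) * ‖C - C * (X * Xᵀ)‖ ^ 2 + (1 + 1 / ξ) * ξ ^ 2 * ‖C‖ ^ 2 := by ring

/-- error transfer between the projections XXᵀ and V̂V̂ᵀ. -/
theorem frob_sq_proj_perturbation {m n l : ℕ}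
    (C : Matrix (Fin m) (Fin (n + 1)) ℝ)
    (X V : Matrix (Fin (n + 1)) (Fin l) ℝ)
    (hX : Xᵀ * X = 1)
    (ξ : ℝ) (hξ : 0 < ξ)
    (h : frob (X * Xᵀ - V * Vᵀ) ≤ ξ) :
    frob (C - C * (V * Vᵀ)) ^ 2 ≤
      (1 + ξ) * frob (C - C * (X * Xᵀ)) ^ 2 + (1 + 1 / ξ) * ξ ^ 2 * frob C ^ 2 :=
  frob_sq_proj_perturbation_general C X V ξ hξ h
end
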